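/- Let X be a complete CAT(0) metric space and let G be a group acting on X by isometries. If some orbit G·x is bounded, then G has a fixed point in X. -/

import Mathlib

/-! The function `f y = sup_g d(g • x, y)` is invariant under `G` and, by the CAT(0) midpoint
inequality, strictly convex in the quantitative sense
`d(y, y')² ≤ 2 (f(y)² + f(y')²) - 4 (inf f)²`.
Hence minimizing sequences are Cauchy, completeness gives a minimizer (the circumcenter of the
orbit), the same inequality makes it unique, and a unique point determined by a `G`-invariant
function is fixed by `G`. -/

/-- A metric space is CAT(0) (in the sense of the CN comparison inequality) if
any two points have a midpoint satisfying the CN inequality. -/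
def IsCAT0 (X : Type*) [MetricSpace X] : Prop :=
  ∀ x y : X, ∃ m : X, dist x m = dist x y / 2 ∧ dist y m = dist x y / 2 ∧
    ∀ z : X, dist z m ^ 2 ≤ (dist z x ^ 2 + dist z y ^ 2) / 2 - dist x y ^ 2 / 4

open Filter Metric Set Topology

/-- `0` when the family is empty or unbounded (the junk value of `⨆` on `ℝ`). -/
noncomputable def supDist {ι X : Type*} [MetricSpace X] (p : ι → X) (y : X) : ℝ :=
  ⨆ i, dist (p i) y

section supDist

variable {ι X : Type*} [MetricSpace X] {p : ι → X}

theorem supDist_nonneg (p : ι → X) (y : X) : 0 ≤ supDist p y :=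
  Real.iSup_nonneg fun _ => dist_nonneg

theorem dist_le_supDist (hp : Bornology.IsBounded (range p)) (i : ι) (y : X) :
    dist (p i) y ≤ supDist p y := by
  obtain ⟨C, hC⟩ := hp.subset_closedBall y
  exact le_ciSup ⟨C, by rintro _ ⟨j, rfl⟩; exact hC ⟨j, rfl⟩⟩ i

theorem supDist_le {y : X} {c : ℝ} (h : ∀ i, dist (p i) y ≤ c) (hc : 0 ≤ c) :
    supDist p y ≤ c :=
  Real.iSup_le h hc

theorem lipschitzWith_supDist (hp : Bornology.IsBounded (range p)) :
    LipschitzWith 1 (supDist p) :=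
  LipschitzWith.of_le_add fun y z =>
    supDist_le (fun i => (dist_triangle _ z _).trans (by grw [dist_le_supDist hp i z, dist_comm]))
      (by positivity [supDist_nonneg p z])

theorem supDist_orbit_smul {G : Type*} [Group G] [MulAction G X]
    (hiso : ∀ g : G, Isometry (fun x : X => g • x)) (x : X) (g : G) (y : X) :
    supDist (fun h : G => h • x) (g • y) = supDist (fun h : G => h • x) y := by
  have hdist : ∀ h : G, dist (h • x) (g • y) = dist ((g⁻¹ * h) • x) y := fun h => by
    rw [← (hiso g⁻¹).dist_eq, inv_smul_smul, mul_smul]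
  simp only [supDist, hdist]
  exact (Equiv.mulLeft g⁻¹).iSup_comp (g := fun h => dist (h • x) y)

end supDist

namespace IsCAT0

variable {X : Type*} [MetricSpace X] {ι : Type*} [Nonempty ι] {p : ι → X}

theorem exists_supDist_sq_le (hX : IsCAT0 X) (hp : Bornology.IsBounded (range p)) (y y' : X) :
    ∃ m, supDist p m ^ 2 ≤ (supDist p y ^ 2 + supDist p y' ^ 2) / 2 - dist y y' ^ 2 / 4 := by
  obtain ⟨m, -, -, hm⟩ := hX y y'
  set R := (supDist p y ^ 2 + supDist p y' ^ 2) / 2 - dist y y' ^ 2 / 4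
  have hR : ∀ i, dist (p i) m ^ 2 ≤ R := fun i => by
    have := hm (p i)
    grw [dist_le_supDist hp i y, dist_le_supDist hp i y'] at this
    exact this
  have hR0 : 0 ≤ R := (sq_nonneg _).trans (hR (Classical.arbitrary ι))
  refine ⟨m, (Real.le_sqrt (supDist_nonneg p m) hR0).mp ?_⟩
  exact supDist_le (fun i => (Real.le_sqrt dist_nonneg hR0).mpr (hR i)) (Real.sqrt_nonneg R)

theorem dist_sq_le (hX : IsCAT0 X) (hp : Bornology.IsBounded (range p)) (y y' : X) :
    dist y y' ^ 2 ≤ 2 * (supDist p y ^ 2 + supDist p y' ^ 2) - 4 * (⨅ z, supDist p z) ^ 2 := by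
  obtain ⟨m, hm⟩ := hX.exists_supDist_sq_le hp y y'
  have hr : ⨅ z, supDist p z ≤ supDist p m :=
    ciInf_le ⟨0, by rintro _ ⟨z, rfl⟩; exact supDist_nonneg p z⟩ m
  have := pow_le_pow_left₀ (Real.iInf_nonneg (supDist_nonneg p)) hr 2
  linarith

theorem cauchySeq_of_tendsto_iInf (hX : IsCAT0 X) (hp : Bornology.IsBounded (range p))
    {u : ℕ → X} (hu : Tendsto (fun n => supDist p (u n)) atTop (𝓝 (⨅ z, supDist p z))) :
    CauchySeq u := by
  set r := ⨅ z, supDist p z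
  rw [cauchySeq_iff_tendsto_dist_atTop_0]
  set g : ℕ × ℕ → ℝ := fun n => √(2 * (supDist p (u n.1) ^ 2 + supDist p (u n.2) ^ 2) - 4 * r ^ 2)
  have hg : Tendsto g atTop (𝓝 0) := by
    rw [← prod_atTop_atTop_eq]
    have := (((hu.comp tendsto_fst).pow 2).add ((hu.comp tendsto_snd).pow 2)).const_mul 2
      |>.sub_const (4 * r ^ 2) |>.sqrt
    rwa [show 2 * (r ^ 2 + r ^ 2) - 4 * r ^ 2 = 0 by ring, Real.sqrt_zero] at this
  refine squeeze_zero (fun _ => dist_nonneg) (fun n => ?_) hg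
  simpa only [abs_dist] using Real.abs_le_sqrt (hX.dist_sq_le hp (u n.1) (u n.2))

theorem exists_supDist_eq_iInf [CompleteSpace X] (hX : IsCAT0 X)
    (hp : Bornology.IsBounded (range p)) : ∃ c, supDist p c = ⨅ z, supDist p z := by
  have : Nonempty X := ⟨p (Classical.arbitrary ι)⟩
  obtain ⟨s, -, hs, hs_mem⟩ := exists_seq_tendsto_sInf (range_nonempty (supDist p))
    ⟨0, by rintro _ ⟨z, rfl⟩; exact supDist_nonneg p z⟩
  choose u hu using hs_mem
  have hfu : Tendsto (fun n => supDist p (u n)) atTop (𝓝 (⨅ z, supDist p z)) := by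
    convert hs using 1
    · exact funext hu
    · rfl
  obtain ⟨c, hc⟩ := cauchySeq_tendsto_of_complete (hX.cauchySeq_of_tendsto_iInf hp hfu)
  exact ⟨c, tendsto_nhds_unique (((lipschitzWith_supDist hp).continuous.tendsto c).comp hc) hfu⟩

theorem eq_of_supDist_eq_iInf (hX : IsCAT0 X) (hp : Bornology.IsBounded (range p)) {y y' : X}
    (hy : supDist p y = ⨅ z, supDist p z) (hy' : supDist p y' = ⨅ z, supDist p z) : y = y' := by
  have := hX.dist_sq_le hp y y'
  rw [hy, hy'] at this
  exact dist_eq_zero.mp (sq_nonpos_iff _ |>.mp (by linarith))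

end IsCAT0

/-- Bruhat–Tits fixed point theorem. -/
theorem stmt_3 {X : Type*} [MetricSpace X] [CompleteSpace X] (hX : IsCAT0 X)
    (G : Type*) [Group G] [MulAction G X]
    (hiso : ∀ g : G, Isometry (fun x : X => g • x))
    (x : X) (hbdd : Bornology.IsBounded (Set.range fun g : G => g • x)) :
    ∃ y : X, ∀ g : G, g • y = y := by
  obtain ⟨c, hc⟩ := hX.exists_supDist_eq_iInf hbdd
  exact ⟨c, fun g => hX.eq_of_supDist_eq_iInf hbdd (by rw [supDist_orbit_smul hiso, hc]) hc⟩
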